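/- arXiv:0804.4231 — 2 statements merged into one kernel-verified Lean document; each statement's English description precedes it below -/
import Mathlib

section
/- Let H(ω) = [[a + ω_1, c], [c̄, b + ω_2]] with a, b ∈ ℝ, c ∈ ℂ \ {0}, where ω_1 and ω_2 are independent real random variables with common probability density ϱ. Then the joint distribution of the ordered pair of eigenvalues (E_1, E_2), E_1 > E_2, of H(ω) is absolutely continuous with density p(E_1, E_2) = (|E_1 − E_2| / √((E_1 − E_2)² − 4|c|²)) · [ϱ(ω_1^+(E_1, E_2)) ϱ(ω_2^+(E_1, E_2)) + ϱ(ω_1^−(E_1, E_2)) ϱ(ω_2^−(E_1, E_2))] on the region |E_1 − E_2| > 2|c|, and p(E_1, E_2) = 0 for |E_1 − E_2| ≤ 2|c|, where (ω_1^+(E_1, E_2), ω_2^+(E_1, E_2)) and (ω_1^−(E_1, E_2), ω_2^−(E_1, E_2)) are the unique solutions of E_{1/2} = (1/2)(ω_1 + ω_2 + a + b ± √((ω_1 − ω_2 + a − b)² + 4|c|²)) with ω_1 − ω_2 + a − b ≥ 0 and ω_1 − ω_2 + a − b ≤ 0, respectively. -/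
open MeasureTheory ProbabilityTheory
open scoped ENNReal

noncomputable section

namespace JointEVAux

def mk2 (p q r s : ℝ) : ℝ × ℝ →L[ℝ] ℝ × ℝ :=
  (p • ContinuousLinearMap.fst ℝ ℝ ℝ + q • ContinuousLinearMap.snd ℝ ℝ ℝ).prod
    (r • ContinuousLinearMap.fst ℝ ℝ ℝ + s • ContinuousLinearMap.snd ℝ ℝ ℝ)

lemma det_mk2 (p q r s : ℝ) : (mk2 p q r s).det = p * s - q * r := by
  have : (mk2 p q r s : ℝ × ℝ →ₗ[ℝ] ℝ × ℝ).det = p * s - q * r := by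
    rw [← LinearMap.det_toMatrix (Module.Basis.finTwoProd ℝ), Matrix.det_fin_two]
    simp [LinearMap.toMatrix_apply, Module.Basis.finTwoProd, mk2, smul_eq_mul]
  exact this

lemma hasFDerivAt_S (k : ℝ) (E : ℝ × ℝ) (h : 0 < (E.1 - E.2)^2 - 4*k^2) :
    HasFDerivAt (fun E : ℝ × ℝ => Real.sqrt ((E.1 - E.2)^2 - 4*k^2))
      (((E.1 - E.2) / Real.sqrt ((E.1 - E.2)^2 - 4*k^2)) •
        (ContinuousLinearMap.fst ℝ ℝ ℝ - ContinuousLinearMap.snd ℝ ℝ ℝ)) E := by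
  have h1 : HasFDerivAt (fun E : ℝ × ℝ => E.1 - E.2)
      (ContinuousLinearMap.fst ℝ ℝ ℝ - ContinuousLinearMap.snd ℝ ℝ ℝ) E :=
    hasFDerivAt_fst.sub hasFDerivAt_snd
  have hq : HasFDerivAt (fun E : ℝ × ℝ => (E.1 - E.2)^2 - 4*k^2)
      ((2*(E.1-E.2)) • (ContinuousLinearMap.fst ℝ ℝ ℝ - ContinuousLinearMap.snd ℝ ℝ ℝ)) E := by
    have h2 := (h1.mul h1).sub_const (4*k^2)
    simp only [← pow_two] at h2
    refine h2.congr_fderiv (Eq.symm ?_)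
    rw [two_mul, add_smul]
  have hs := (Real.hasDerivAt_sqrt h.ne').comp_hasFDerivAt E hq
  have hsq : 0 < Real.sqrt ((E.1 - E.2)^2 - 4*k^2) := Real.sqrt_pos.mpr h
  refine hs.congr_fderiv (Eq.symm ?_)
  rw [smul_smul]
  congr 1
  field_simp

lemma hasFDerivAt_g (a b k σ : ℝ) (E : ℝ × ℝ) (h : 0 < (E.1 - E.2)^2 - 4*k^2) :
    HasFDerivAt (fun E : ℝ × ℝ =>
        ((E.1 + E.2 - 2*a + σ * Real.sqrt ((E.1 - E.2)^2 - 4*k^2)) / 2,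
         (E.1 + E.2 - 2*b - σ * Real.sqrt ((E.1 - E.2)^2 - 4*k^2)) / 2))
      (mk2 ((1 + σ * ((E.1 - E.2) / Real.sqrt ((E.1 - E.2)^2 - 4*k^2))) / 2)
           ((1 - σ * ((E.1 - E.2) / Real.sqrt ((E.1 - E.2)^2 - 4*k^2))) / 2)
           ((1 - σ * ((E.1 - E.2) / Real.sqrt ((E.1 - E.2)^2 - 4*k^2))) / 2)
           ((1 + σ * ((E.1 - E.2) / Real.sqrt ((E.1 - E.2)^2 - 4*k^2))) / 2)) E := by
  set t : ℝ := (E.1 - E.2) / Real.sqrt ((E.1 - E.2)^2 - 4*k^2) with ht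
  have hS := hasFDerivAt_S k E h
  have hσS := hS.const_mul σ
  have hsum : HasFDerivAt (fun E : ℝ × ℝ => E.1 + E.2)
      (ContinuousLinearMap.fst ℝ ℝ ℝ + ContinuousLinearMap.snd ℝ ℝ ℝ) E :=
    hasFDerivAt_fst.add hasFDerivAt_snd
  have c1 : HasFDerivAt (fun E : ℝ × ℝ =>
        (E.1 + E.2 - 2*a + σ * Real.sqrt ((E.1 - E.2)^2 - 4*k^2)) / 2)
      (((1 + σ * t)/2) • ContinuousLinearMap.fst ℝ ℝ ℝ +
        ((1 - σ * t)/2) • ContinuousLinearMap.snd ℝ ℝ ℝ) E := by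
    have h1 := ((hsum.sub_const (2*a)).add hσS).const_mul (2⁻¹ : ℝ)
    have hfun : (fun E : ℝ × ℝ =>
        (E.1 + E.2 - 2*a + σ * Real.sqrt ((E.1 - E.2)^2 - 4*k^2)) / 2)
        = fun y : ℝ × ℝ =>
          (2⁻¹ : ℝ) * (y.1 + y.2 - 2*a + σ * Real.sqrt ((y.1 - y.2)^2 - 4*k^2)) := by
      funext y; ring
    rw [hfun]
    refine h1.congr_fderiv (Eq.symm ?_)
    apply ContinuousLinearMap.ext
    intro v
    simp [smul_eq_mul]
    ring
  have c2 : HasFDerivAt (fun E : ℝ × ℝ =>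
        (E.1 + E.2 - 2*b - σ * Real.sqrt ((E.1 - E.2)^2 - 4*k^2)) / 2)
      (((1 - σ * t)/2) • ContinuousLinearMap.fst ℝ ℝ ℝ +
        ((1 + σ * t)/2) • ContinuousLinearMap.snd ℝ ℝ ℝ) E := by
    have h1 := ((hsum.sub_const (2*b)).sub hσS).const_mul (2⁻¹ : ℝ)
    have hfun : (fun E : ℝ × ℝ =>
        (E.1 + E.2 - 2*b - σ * Real.sqrt ((E.1 - E.2)^2 - 4*k^2)) / 2)
        = fun y : ℝ × ℝ =>
          (2⁻¹ : ℝ) * (y.1 + y.2 - 2*b - σ * Real.sqrt ((y.1 - y.2)^2 - 4*k^2)) := by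
      funext y; ring
    rw [hfun]
    refine h1.congr_fderiv (Eq.symm ?_)
    apply ContinuousLinearMap.ext
    intro v
    simp [smul_eq_mul]
    ring
  exact c1.prodMk c2

lemma prod_withDensity_eq (f g : ℝ → ℝ≥0∞) (hf : Measurable f) (hg : Measurable g)
    [SigmaFinite (volume.withDensity f)] [SigmaFinite (volume.withDensity g)] :
    (volume.withDensity f).prod (volume.withDensity g)
      = ((volume : Measure ℝ).prod volume).withDensity fun p => f p.1 * g p.2 := by
  refine Measure.prod_eq fun s t hs ht => ?_
  rw [withDensity_apply _ (hs.prod ht), ← Measure.prod_restrict,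
    MeasureTheory.lintegral_prod_mul hf.aemeasurable hg.aemeasurable,
    withDensity_apply _ hs, withDensity_apply _ ht]

/-- left inverse : Φ (g σ E) = E for E in the target region -/
lemma left_inv (a b k : ℝ) (hk : 0 < k) (σ : ℝ) (hσ : σ = 1 ∨ σ = -1)
    (E : ℝ × ℝ) (hE : 2*k < E.1 - E.2) :
    (fun ω : ℝ × ℝ =>
        ((ω.1 + ω.2 + a + b + Real.sqrt ((ω.1 - ω.2 + a - b)^2 + 4*k^2)) / 2,
         (ω.1 + ω.2 + a + b - Real.sqrt ((ω.1 - ω.2 + a - b)^2 + 4*k^2)) / 2))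
      ((E.1 + E.2 - 2*a + σ * Real.sqrt ((E.1 - E.2)^2 - 4*k^2)) / 2,
       (E.1 + E.2 - 2*b - σ * Real.sqrt ((E.1 - E.2)^2 - 4*k^2)) / 2) = E := by
  have hσ2 : σ^2 = 1 := by rcases hσ with rfl | rfl <;> norm_num
  have hd : 0 < E.1 - E.2 := lt_trans (by positivity) hE
  have hq : 0 < (E.1 - E.2)^2 - 4*k^2 := by nlinarith
  set S := Real.sqrt ((E.1 - E.2)^2 - 4*k^2) with hs
  have hS2 : S^2 = (E.1 - E.2)^2 - 4*k^2 := Real.sq_sqrt hq.le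
  have h1 : ((E.1 + E.2 - 2*a + σ * S) / 2 - (E.1 + E.2 - 2*b - σ * S) / 2 + a - b)^2
      + 4*k^2 = (E.1 - E.2)^2 := by
    have h0 : ((E.1 + E.2 - 2*a + σ * S) / 2 - (E.1 + E.2 - 2*b - σ * S) / 2 + a - b)
        = σ * S := by ring
    rw [h0, mul_pow, hσ2, one_mul, hS2]; ring
  have hsqrt : Real.sqrt (((E.1 + E.2 - 2*a + σ * S) / 2
      - (E.1 + E.2 - 2*b - σ * S) / 2 + a - b)^2 + 4*k^2) = E.1 - E.2 := by
    rw [h1, Real.sqrt_sq hd.le]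
  simp only
  rw [hsqrt]
  exact Prod.ext (by ring) (by ring)

/-- right inverse : g σ (Φ ω) = ω and Φ ω ∈ T, for ω with 0 < σ * (ω₁ - ω₂ + a - b). -/
lemma right_inv (a b k : ℝ) (hk : 0 < k) (σ : ℝ) (hσ : σ = 1 ∨ σ = -1)
    (ω : ℝ × ℝ) (hω : 0 < σ * (ω.1 - ω.2 + a - b)) :
    2*k < ((ω.1 + ω.2 + a + b + Real.sqrt ((ω.1 - ω.2 + a - b)^2 + 4*k^2)) / 2)
        - ((ω.1 + ω.2 + a + b - Real.sqrt ((ω.1 - ω.2 + a - b)^2 + 4*k^2)) / 2) ∧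
    (fun E : ℝ × ℝ =>
        ((E.1 + E.2 - 2*a + σ * Real.sqrt ((E.1 - E.2)^2 - 4*k^2)) / 2,
         (E.1 + E.2 - 2*b - σ * Real.sqrt ((E.1 - E.2)^2 - 4*k^2)) / 2))
      ((ω.1 + ω.2 + a + b + Real.sqrt ((ω.1 - ω.2 + a - b)^2 + 4*k^2)) / 2,
       (ω.1 + ω.2 + a + b - Real.sqrt ((ω.1 - ω.2 + a - b)^2 + 4*k^2)) / 2) = ω := by
  have hσ2 : σ^2 = 1 := by rcases hσ with rfl | rfl <;> norm_num
  set d := ω.1 - ω.2 + a - b with hdd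
  have hd0 : d ≠ 0 := by
    intro h; rw [h, mul_zero] at hω; exact lt_irrefl 0 hω
  have hD : 0 < d^2 + 4*k^2 := by positivity
  set R := Real.sqrt (d^2 + 4*k^2) with hR
  have hR2 : R^2 = d^2 + 4*k^2 := Real.sq_sqrt hD.le
  have hRpos : 0 < R := Real.sqrt_pos.mpr hD
  have hgt : 2*k < R := by
    rw [hR]
    rw [show (2*k : ℝ) = Real.sqrt ((2*k)^2) from (Real.sqrt_sq (by positivity)).symm]
    apply Real.sqrt_lt_sqrt (by positivity)
    have : 0 < d^2 := by positivity
    nlinarith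
  have hdiff : ((ω.1 + ω.2 + a + b + R) / 2) - ((ω.1 + ω.2 + a + b - R) / 2) = R := by ring
  constructor
  · rw [hdiff]; exact hgt
  · simp only
    have harg : ((ω.1 + ω.2 + a + b + R) / 2 - (ω.1 + ω.2 + a + b - R) / 2)^2 - 4*k^2
        = d^2 := by rw [hdiff, hR2]; ring
    have hS : Real.sqrt (((ω.1 + ω.2 + a + b + R) / 2
        - (ω.1 + ω.2 + a + b - R) / 2)^2 - 4*k^2) = σ * d := by
      rw [harg, Real.sqrt_sq_eq_abs]
      rcases hσ with rfl | rfl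
      · rw [one_mul] at hω ⊢; exact abs_of_pos hω
      · have hneg : d < 0 := by nlinarith
        rw [abs_of_neg hneg]; ring
    rw [hS]
    have hσσ : σ * (σ * d) = d := by rw [← mul_assoc, ← sq, hσ2, one_mul]
    rw [hσσ, hdd]
    exact Prod.ext (by ring) (by ring)

lemma lintegral_ofReal_ite {α : Type*} [MeasurableSpace α] (μ : Measure α)
    (A : Set α) (hA : MeasurableSet A) (P : α → Prop) [DecidablePred P]
    (hP : MeasurableSet {x | P x}) (f : α → ℝ) :
    ∫⁻ x in A, ENNReal.ofReal (if P x then f x else 0) ∂μ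
      = ∫⁻ x in A ∩ {x | P x}, ENNReal.ofReal (f x) ∂μ := by
  have h : ∀ x, ENNReal.ofReal (if P x then f x else 0)
      = Set.indicator {x | P x} (fun x => ENNReal.ofReal (f x)) x := by
    intro x
    by_cases hx : P x
    · simp [Set.indicator, hx]
    · simp [Set.indicator, hx]
  simp only [h]
  rw [lintegral_indicator hP, Measure.restrict_restrict hP, Set.inter_comm]

end JointEVAux
set_option maxHeartbeats 1000000 in
/-- Formula (10): the joint density of the (ordered) pair of eigenvalues of the `2 × 2`
random operator `H(ω) = [[a + ω₁, c], [c̄, b + ω₂]]` with `ω₁, ω₂` i.i.d. with density `ϱ`: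
the pushforward of the law of `(ω₁, ω₂)` under the eigenvalue map equals the measure with
density `p(E₁,E₂) = (|E₁ - E₂|/√((E₁ - E₂)² - 4|c|²)) · Σ_branches ϱ(ω₁(E₁,E₂)) ϱ(ω₂(E₁,E₂))`
on `{E₁ - E₂ > 2|c|}`, and zero density for `|E₁ - E₂| ≤ 2|c|`. -/
theorem two_by_two_joint_eigenvalue_density (a b : ℝ) (c : ℂ) (hc : c ≠ 0)
    (ϱ : ℝ → ℝ) (hmeas : Measurable ϱ) (hnn : ∀ t, 0 ≤ ϱ t)
    (hprob : IsProbabilityMeasure (volume.withDensity fun t => ENNReal.ofReal (ϱ t))) :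
    Measure.map
        (fun ω : ℝ × ℝ =>
          ((ω.1 + ω.2 + a + b +
              Real.sqrt ((ω.1 - ω.2 + a - b) ^ 2 + 4 * ‖c‖ ^ 2)) / 2,
           (ω.1 + ω.2 + a + b -
              Real.sqrt ((ω.1 - ω.2 + a - b) ^ 2 + 4 * ‖c‖ ^ 2)) / 2))
        ((volume.withDensity fun t => ENNReal.ofReal (ϱ t)).prod
          (volume.withDensity fun t => ENNReal.ofReal (ϱ t)))
      = volume.withDensity fun E : ℝ × ℝ =>
          ENNReal.ofReal
            (if 2 * ‖c‖ < E.1 - E.2 then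
              ((E.1 - E.2) / Real.sqrt ((E.1 - E.2) ^ 2 - 4 * ‖c‖ ^ 2)) *
                (ϱ ((E.1 + E.2 - 2 * a +
                      Real.sqrt ((E.1 - E.2) ^ 2 - 4 * ‖c‖ ^ 2)) / 2) *
                   ϱ ((E.1 + E.2 - 2 * b -
                      Real.sqrt ((E.1 - E.2) ^ 2 - 4 * ‖c‖ ^ 2)) / 2) +
                 ϱ ((E.1 + E.2 - 2 * a -
                      Real.sqrt ((E.1 - E.2) ^ 2 - 4 * ‖c‖ ^ 2)) / 2) *
                   ϱ ((E.1 + E.2 - 2 * b +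
                      Real.sqrt ((E.1 - E.2) ^ 2 - 4 * ‖c‖ ^ 2)) / 2))
            else 0) := by
  haveI := hprob
  set k := ‖c‖ with hkdef
  have hk : 0 < k := norm_pos_iff.mpr hc
  set Φ : ℝ × ℝ → ℝ × ℝ := fun ω =>
    ((ω.1 + ω.2 + a + b + Real.sqrt ((ω.1 - ω.2 + a - b) ^ 2 + 4 * k ^ 2)) / 2,
     (ω.1 + ω.2 + a + b - Real.sqrt ((ω.1 - ω.2 + a - b) ^ 2 + 4 * k ^ 2)) / 2) with hΦdef
  set g : ℝ → ℝ × ℝ → ℝ × ℝ := fun σ E =>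
    ((E.1 + E.2 - 2*a + σ * Real.sqrt ((E.1 - E.2)^2 - 4*k^2)) / 2,
     (E.1 + E.2 - 2*b - σ * Real.sqrt ((E.1 - E.2)^2 - 4*k^2)) / 2) with hgdef
  set F : ℝ × ℝ → ℝ≥0∞ := fun p => ENNReal.ofReal (ϱ p.1) * ENNReal.ofReal (ϱ p.2)
    with hFdef
  set T : Set (ℝ × ℝ) := {E | 2*k < E.1 - E.2} with hTdef
  have hTm : MeasurableSet T :=
    (isOpen_lt continuous_const (continuous_fst.sub continuous_snd)).measurableSet
  have hΦm : Measurable Φ := by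
    rw [hΦdef]; fun_prop
  have hdpos : ∀ E : ℝ × ℝ, E ∈ T → 0 < (E.1 - E.2)^2 - 4*k^2 := by
    intro E hE
    have : 2*k < E.1 - E.2 := hE
    nlinarith
  refine Measure.ext fun A hA => ?_
  rw [Measure.map_apply hΦm hA,
    JointEVAux.prod_withDensity_eq _ _ (by fun_prop) (by fun_prop), ← Measure.volume_eq_prod,
    withDensity_apply _ (hΦm hA), withDensity_apply _ hA]
  -- the diagonal is null
  have hnull : volume {ω : ℝ × ℝ | ω.1 - ω.2 + a - b = 0} = 0 := by
    have hms : MeasurableSet {ω : ℝ × ℝ | ω.1 - ω.2 + a - b = 0} :=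
      (isClosed_eq (by fun_prop) continuous_const).measurableSet
    rw [Measure.volume_eq_prod, Measure.prod_apply hms]
    have h0 : ∀ x : ℝ, volume {y : ℝ | x - y + a - b = 0} = 0 := by
      intro x
      have : {y : ℝ | x - y + a - b = 0} = {x + a - b} := by
        ext y
        simp only [Set.mem_setOf_eq, Set.mem_singleton_iff]
        constructor <;> intro h <;> linarith
      rw [this]
      exact measure_singleton _
    have h0' : ∀ x : ℝ, volume (Prod.mk x ⁻¹' {ω : ℝ × ℝ | ω.1 - ω.2 + a - b = 0}) = 0 := by
      intro x
      exact h0 x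
    simp only [h0']
    simp
  -- splitting the domain
  have hsplit : ∫⁻ p in Φ ⁻¹' A, F p ∂volume
      = (∫⁻ p in Φ ⁻¹' A ∩ {ω : ℝ × ℝ | 0 < 1 * (ω.1 - ω.2 + a - b)}, F p ∂volume)
      + (∫⁻ p in Φ ⁻¹' A ∩ {ω : ℝ × ℝ | 0 < (-1) * (ω.1 - ω.2 + a - b)}, F p ∂volume) := by
    have hmp : MeasurableSet {ω : ℝ × ℝ | 0 < 1 * (ω.1 - ω.2 + a - b)} :=
      (isOpen_lt continuous_const (by fun_prop)).measurableSet
    have hmm : MeasurableSet {ω : ℝ × ℝ | 0 < (-1) * (ω.1 - ω.2 + a - b)} :=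
      (isOpen_lt continuous_const (by fun_prop)).measurableSet
    have hae : (Φ ⁻¹' A : Set (ℝ × ℝ)) =ᵐ[volume]
        (((Φ ⁻¹' A ∩ {ω : ℝ × ℝ | 0 < 1 * (ω.1 - ω.2 + a - b)})
          ∪ (Φ ⁻¹' A ∩ {ω : ℝ × ℝ | 0 < (-1) * (ω.1 - ω.2 + a - b)})) : Set (ℝ × ℝ)) := by
      rw [MeasureTheory.ae_eq_set]
      constructor
      · refine measure_mono_null ?_ hnull
        rintro ω ⟨hωA, hω⟩
        have h1 : ¬ 0 < 1 * (ω.1 - ω.2 + a - b) := fun h =>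
          hω (Set.mem_union_left _ ⟨hωA, h⟩)
        have h2 : ¬ 0 < (-1) * (ω.1 - ω.2 + a - b) := fun h =>
          hω (Set.mem_union_right _ ⟨hωA, h⟩)
        rw [not_lt] at h1 h2
        show ω.1 - ω.2 + a - b = 0
        linarith
      · have : ((Φ ⁻¹' A ∩ {ω : ℝ × ℝ | 0 < 1 * (ω.1 - ω.2 + a - b)})
          ∪ (Φ ⁻¹' A ∩ {ω : ℝ × ℝ | 0 < (-1) * (ω.1 - ω.2 + a - b)})) \ (Φ ⁻¹' A) = ∅ := by
          rw [Set.diff_eq_empty]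
          exact Set.union_subset Set.inter_subset_left Set.inter_subset_left
        rw [this]
        exact measure_empty
    rw [setLIntegral_congr hae]
    refine lintegral_union ((hΦm hA).inter hmm) ?_
    rw [Set.disjoint_left]
    rintro ω ⟨-, h1⟩ ⟨-, h2⟩
    simp only [Set.mem_setOf_eq] at h1 h2
    linarith
  -- change of variables on each branch
  have key : ∀ σ : ℝ, σ = 1 ∨ σ = -1 →
      ∫⁻ p in Φ ⁻¹' A ∩ {ω : ℝ × ℝ | 0 < σ * (ω.1 - ω.2 + a - b)}, F p ∂volume
        = ∫⁻ E in A ∩ T,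
            ENNReal.ofReal ((E.1 - E.2) / Real.sqrt ((E.1 - E.2)^2 - 4*k^2)) * F (g σ E)
              ∂volume := by
    intro σ hσ
    have himg : g σ '' (A ∩ T) = Φ ⁻¹' A ∩ {ω : ℝ × ℝ | 0 < σ * (ω.1 - ω.2 + a - b)} := by
      apply Set.Subset.antisymm
      · rintro ω ⟨E, hE, rfl⟩
        have hq := hdpos E hE.2
        have hSpos : 0 < Real.sqrt ((E.1 - E.2)^2 - 4*k^2) := Real.sqrt_pos.mpr hq
        have hΦg : Φ (g σ E) = E := JointEVAux.left_inv a b k hk σ hσ E hE.2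
        refine ⟨?_, ?_⟩
        · show Φ (g σ E) ∈ A
          rw [hΦg]; exact hE.1
        · show 0 < σ * ((g σ E).1 - (g σ E).2 + a - b)
          have hcomp : (g σ E).1 - (g σ E).2 + a - b
              = σ * Real.sqrt ((E.1 - E.2)^2 - 4*k^2) := by
            simp only [hgdef]; ring
          rw [hcomp, ← mul_assoc, ← sq]
          have hσ2 : σ^2 = 1 := by rcases hσ with rfl | rfl <;> norm_num
          rw [hσ2, one_mul]
          exact hSpos
      · rintro ω ⟨hωA, hωs⟩
        obtain ⟨hT', hginv⟩ := JointEVAux.right_inv a b k hk σ hσ ω hωs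
        exact ⟨Φ ω, ⟨hωA, hT'⟩, hginv⟩
    rw [← himg]
    rw [lintegral_image_eq_lintegral_abs_det_fderiv_mul volume (hA.inter hTm)
      (fun E hE => (JointEVAux.hasFDerivAt_g a b k σ E (hdpos E hE.2)).hasFDerivWithinAt)
      (fun x hx y hy hxy => by
        have e1 := JointEVAux.left_inv a b k hk σ hσ x hx.2
        have e2 := JointEVAux.left_inv a b k hk σ hσ y hy.2
        calc x = Φ (g σ x) := e1.symm
        _ = Φ (g σ y) := congrArg Φ hxy
        _ = y := e2) F]
    refine setLIntegral_congr_fun (hA.inter hTm) ?_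
    intro E hE
    beta_reduce
    congr 1
    have hq := hdpos E hE.2
    have hd0 : 0 < E.1 - E.2 := lt_trans (by positivity) hE.2
    have hSpos : 0 < Real.sqrt ((E.1 - E.2)^2 - 4*k^2) := Real.sqrt_pos.mpr hq
    rw [JointEVAux.det_mk2]
    have hdet : ((1 + σ * ((E.1 - E.2) / Real.sqrt ((E.1 - E.2)^2 - 4*k^2))) / 2)
          * ((1 + σ * ((E.1 - E.2) / Real.sqrt ((E.1 - E.2)^2 - 4*k^2))) / 2)
        - ((1 - σ * ((E.1 - E.2) / Real.sqrt ((E.1 - E.2)^2 - 4*k^2))) / 2)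
          * ((1 - σ * ((E.1 - E.2) / Real.sqrt ((E.1 - E.2)^2 - 4*k^2))) / 2)
        = σ * ((E.1 - E.2) / Real.sqrt ((E.1 - E.2)^2 - 4*k^2)) := by ring
    rw [hdet]
    have hJ : 0 ≤ (E.1 - E.2) / Real.sqrt ((E.1 - E.2)^2 - 4*k^2) :=
      div_nonneg hd0.le hSpos.le
    rcases hσ with rfl | rfl
    · rw [one_mul, abs_of_nonneg hJ]
    · rw [neg_one_mul, abs_neg, abs_of_nonneg hJ]
  rw [hsplit, key 1 (Or.inl rfl), key (-1) (Or.inr rfl)]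
  rw [JointEVAux.lintegral_ofReal_ite volume A hA (fun E : ℝ × ℝ => 2*k < E.1 - E.2) hTm]
  have hm1 : Measurable fun E : ℝ × ℝ =>
      ENNReal.ofReal ((E.1 - E.2) / Real.sqrt ((E.1 - E.2)^2 - 4*k^2)) * F (g 1 E) := by
    simp only [hFdef, hgdef]
    fun_prop
  rw [← lintegral_add_left hm1]
  refine setLIntegral_congr_fun (hA.inter hTm) ?_
  intro E hE
  have hq := hdpos E hE.2
  have hd0 : 0 < E.1 - E.2 := lt_trans (by positivity) hE.2
  have hSpos : 0 < Real.sqrt ((E.1 - E.2)^2 - 4*k^2) := Real.sqrt_pos.mpr hq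
  have hJ : 0 ≤ (E.1 - E.2) / Real.sqrt ((E.1 - E.2)^2 - 4*k^2) :=
    div_nonneg hd0.le hSpos.le
  have e1 : g 1 E = ((E.1 + E.2 - 2*a + Real.sqrt ((E.1 - E.2)^2 - 4*k^2)) / 2,
      (E.1 + E.2 - 2*b - Real.sqrt ((E.1 - E.2)^2 - 4*k^2)) / 2) := by
    simp only [hgdef, Prod.mk.injEq]
    exact ⟨by ring, by ring⟩
  have e2 : g (-1) E = ((E.1 + E.2 - 2*a - Real.sqrt ((E.1 - E.2)^2 - 4*k^2)) / 2,
      (E.1 + E.2 - 2*b + Real.sqrt ((E.1 - E.2)^2 - 4*k^2)) / 2) := by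
    simp only [hgdef, Prod.mk.injEq]
    exact ⟨by ring, by ring⟩
  simp only [Pi.add_apply, e1, e2, hFdef]
  rw [ENNReal.ofReal_mul hJ,
    ENNReal.ofReal_add (mul_nonneg (hnn _) (hnn _)) (mul_nonneg (hnn _) (hnn _)),
    mul_add, ENNReal.ofReal_mul (hnn _), ENNReal.ofReal_mul (hnn _)]
end
end

section
/- There is a 2×2 random operator H(ω) = [[a + ω_1, c], [c̄, b + ω_2]] with c ≠ 0 and ω_1, ω_2 i.i.d. with a bounded continuous density ϱ (so Assumption R holds with ρ∞ = sup ϱ), for which no constant C makes the two-interval bound ℙ{σ(H(ω)) ∩ I_1 ≠ ∅ and σ(H(ω)) ∩ I_2 ≠ ∅} ≤ C · ρ∞² · |I_1| · |I_2| valid for all intervals I_1, I_2: explicitly, if ϱ is continuous and strictly positive at the pair (ω_1(E_1, E_2), ω_2(E_1, E_2)) corresponding to eigenvalues at the gap edge |E_1 − E_2| = 2|c|, then the joint eigenvalue density p(E_1, E_2) diverges like ((E_1 − E_2) − 2|c|)^{−1/2} as E_1 − E_2 ↓ 2|c|, so for every C > 0 there exist intervals I_1, I_2 with ℙ{E_1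 ∈ I_1, E_2 ∈ I_2} > C · ρ∞² · |I_1| · |I_2|. -/
/-!
Near the gap edge `E₁ - E₂ = 2‖c‖` the eigenvalues depend only quadratically on the difference
`d = ω₁ - ω₂ + a - b`, since `√(d² + 4‖c‖²) = 2‖c‖ + O(d²)`. Hence, for intervals of length `2ε`
centred at the edge, the event `{E₁ ∈ I₁, E₂ ∈ I₂}` contains a parallelogram of width `ε` in
`ω₁ + ω₂` and of length `≍ √ε` in `ω₁ - ω₂`. Where `ϱ` is bounded below this parallelogram has
probability `≳ ε^{3/2}`, which beats `C · |I₁| · |I₂| = 4Cε²` for small `ε`.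
-/

open MeasureTheory Set Filter Topology
open scoped ENNReal

noncomputable section

/-- With `K = ‖c‖`, these are the eigenvalues `E₁ ≥ E₂` of `[[a + ω₁, c], [c̄, b + ω₂]]`. -/
def upperEigenvalue (a b K : ℝ) (ω : ℝ × ℝ) : ℝ :=
  (ω.1 + ω.2 + a + b + Real.sqrt ((ω.1 - ω.2 + a - b) ^ 2 + 4 * K ^ 2)) / 2

def lowerEigenvalue (a b K : ℝ) (ω : ℝ × ℝ) : ℝ :=
  (ω.1 + ω.2 + a + b - Real.sqrt ((ω.1 - ω.2 + a - b) ^ 2 + 4 * K ^ 2)) / 2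

theorem eigenvalues_mem_Icc_of_near_gap_edge {a b K m ε : ℝ} {ω : ℝ × ℝ} (hK : 0 ≤ K)
    (hsum : |ω.1 + ω.2 + a + b - 2 * m| ≤ ε) (hdiff : (ω.1 - ω.2 + a - b) ^ 2 ≤ 2 * K * ε) :
    upperEigenvalue a b K ω ∈ Icc (m + K - ε) (m + K + ε) ∧
      lowerEigenvalue a b K ω ∈ Icc (m - K - ε) (m - K + ε) := by
  set R := Real.sqrt ((ω.1 - ω.2 + a - b) ^ 2 + 4 * K ^ 2)
  have hε : 0 ≤ ε := (abs_nonneg _).trans hsum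
  have hR_ge : 2 * K ≤ R :=
    (le_abs_self _).trans (Real.abs_le_sqrt (by nlinarith [sq_nonneg (ω.1 - ω.2 + a - b)]))
  have hR_le : R ≤ 2 * K + ε / 2 :=
    (Real.sqrt_le_left (by positivity)).mpr (by nlinarith)
  obtain ⟨hsum_lo, hsum_hi⟩ := abs_le.mp hsum
  simp only [upperEigenvalue, lowerEigenvalue, mem_Icc]
  refine ⟨⟨?_, ?_⟩, ?_, ?_⟩ <;> linarith

theorem ofReal_mul_le_withDensity_apply {α : Type*} [MeasurableSpace α] {μ : Measure α}
    {f : α → ℝ} {s : Set α} {p : ℝ} (hs : MeasurableSet s) (hf : ∀ x ∈ s, p ≤ f x) :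
    ENNReal.ofReal p * μ s ≤ μ.withDensity (fun x => ENNReal.ofReal (f x)) s := by
  rw [withDensity_apply _ hs, ← setLIntegral_const]
  exact setLIntegral_mono' hs fun x hx => ENNReal.ofReal_le_ofReal (hf x hx)

theorem mul_le_prod_apply_of_le_measure_preimage_prodMk {α β : Type*} [MeasurableSpace α]
    [MeasurableSpace β] {μ : Measure α} {ν : Measure β} [SFinite ν] {S : Set (α × β)}
    {A : Set α} {c : ℝ≥0∞} (hS : MeasurableSet S) (hA : MeasurableSet A)
    (hc : ∀ x ∈ A, c ≤ ν (Prod.mk x ⁻¹' S)) :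
    c * μ A ≤ μ.prod ν S := by
  rw [Measure.prod_apply hS, ← setLIntegral_const]
  exact (setLIntegral_mono' hA hc).trans (setLIntegral_le_lintegral _ _)

theorem exists_forall_abs_sub_lt_imp_le_of_pos {ϱ : ℝ → ℝ} (hϱ : Continuous ϱ) {t₁ t₂ : ℝ}
    (h₁ : 0 < ϱ t₁) (h₂ : 0 < ϱ t₂) :
    ∃ p > 0, ∃ r > 0, ∀ x, (|x - t₁| < r → p ≤ ϱ x) ∧ (|x - t₂| < r → p ≤ ϱ x) := by
  have hnear : ∀ {t}, 0 < ϱ t → ∃ r > 0, ∀ x, |x - t| < r → ϱ t / 2 ≤ ϱ x := fun {t} ht =>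
    let ⟨r, hr, hball⟩ := Metric.eventually_nhds_iff_ball.mp
      (hϱ.continuousAt.eventually (lt_mem_nhds (half_lt_self ht)))
    ⟨r, hr, fun x hx => (hball x (by rwa [Metric.mem_ball, Real.dist_eq])).le⟩
  obtain ⟨r₁, hr₁, hball₁⟩ := hnear h₁
  obtain ⟨r₂, hr₂, hball₂⟩ := hnear h₂
  refine ⟨min (ϱ t₁ / 2) (ϱ t₂ / 2), by positivity, min r₁ r₂, lt_min hr₁ hr₂, fun x => ⟨?_, ?_⟩⟩
  · exact fun hx => (min_le_left _ _).trans (hball₁ x (hx.trans_le (min_le_left _ _)))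
  · exact fun hx => (min_le_right _ _).trans (hball₂ x (hx.trans_le (min_le_right _ _)))

def antidiagonalStrip (t h s ε : ℝ) : Set (ℝ × ℝ) :=
  {ω | ω.1 ∈ Icc t (t + h) ∧ ω.2 ∈ Icc (s - ω.1 - ε) (s - ω.1 + ε)}

theorem measurableSet_antidiagonalStrip (t h s ε : ℝ) :
    MeasurableSet (antidiagonalStrip t h s ε) :=
  (measurable_fst measurableSet_Icc).inter
    ((measurableSet_le (by fun_prop : Measurable fun ω : ℝ × ℝ => s - ω.1 - ε) measurable_snd).inter
      (measurableSet_le measurable_snd (by fun_prop : Measurable fun ω : ℝ × ℝ => s - ω.1 + ε)))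

theorem le_prod_withDensity_antidiagonalStrip {ϱ : ℝ → ℝ} {t h s ε p : ℝ}
    (hϱ₁ : ∀ x ∈ Icc t (t + h), p ≤ ϱ x)
    (hϱ₂ : ∀ x ∈ Icc t (t + h), ∀ y ∈ Icc (s - x - ε) (s - x + ε), p ≤ ϱ y) :
    ENNReal.ofReal p * ENNReal.ofReal (2 * ε) * (ENNReal.ofReal p * ENNReal.ofReal h) ≤
      ((volume.withDensity fun x => ENNReal.ofReal (ϱ x)).prod
        (volume.withDensity fun x => ENNReal.ofReal (ϱ x))) (antidiagonalStrip t h s ε) := by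
  refine (mul_le_mul_right ?_ _).trans
    (mul_le_prod_apply_of_le_measure_preimage_prodMk (measurableSet_antidiagonalStrip t h s ε)
      (measurableSet_Icc (a := t) (b := t + h)) fun x hx => ?_)
  · have := ofReal_mul_le_withDensity_apply (μ := volume) measurableSet_Icc hϱ₁
    rwa [Real.volume_Icc, add_sub_cancel_left] at this
  · have hsection : Prod.mk x ⁻¹' antidiagonalStrip t h s ε = Icc (s - x - ε) (s - x + ε) := by
      ext y; simp only [antidiagonalStrip, mem_preimage, mem_ofPred_eq, hx, true_and]
    rw [hsection]
    convert ofReal_mul_le_withDensity_apply measurableSet_Icc (hϱ₂ x hx) using 3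
    rw [Real.volume_Icc]; ring_nf

theorem antidiagonalStrip_subset_eigenvalues_mem_Icc {a b K t h ε : ℝ} (hK : 0 ≤ K)
    (hεh : ε ≤ 2 * h) (hKε : (4 * h) ^ 2 ≤ 2 * K * ε) :
    antidiagonalStrip t h (2 * t + a - b) ε ⊆
      {ω | upperEigenvalue a b K ω ∈ Icc (t + a + K - ε) (t + a + K + ε) ∧
        lowerEigenvalue a b K ω ∈ Icc (t + a - K - ε) (t + a - K + ε)} := by
  rintro ω ⟨⟨hω₁_lo, hω₁_hi⟩, hω₂_lo, hω₂_hi⟩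
  refine eigenvalues_mem_Icc_of_near_gap_edge hK (abs_le.mpr ⟨by linarith, by linarith⟩) ?_
  exact (sq_le_sq' (by linarith) (by linarith)).trans hKε

theorem exists_Icc_mul_volume_lt_prod_eigenvalues_mem (a b K : ℝ) (hK : 0 < K) {ϱ : ℝ → ℝ}
    (hϱ : Continuous ϱ) {t : ℝ} (ht : 0 < ϱ t) (ht' : 0 < ϱ (t + a - b)) {C : ℝ≥0∞}
    (hC : C ≠ ∞) :
    ∃ u₁ v₁ u₂ v₂ : ℝ, u₁ < v₁ ∧ u₂ < v₂ ∧
      C * volume (Icc u₁ v₁) * volume (Icc u₂ v₂) <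
        ((volume.withDensity fun x => ENNReal.ofReal (ϱ x)).prod
          (volume.withDensity fun x => ENNReal.ofReal (ϱ x)))
          {ω | upperEigenvalue a b K ω ∈ Icc u₁ v₁ ∧ lowerEigenvalue a b K ω ∈ Icc u₂ v₂} := by
  obtain ⟨p, hp, r, hr, hϱp⟩ := exists_forall_abs_sub_lt_imp_le_of_pos hϱ ht ht'
  set c := C.toReal
  have hsmall : ∀ᶠ h in 𝓝[>] (0 : ℝ), 0 < h ∧ 4 * h < K ∧ 3 * h < r ∧ 16 * c * h < p ^ 2 * K := by
    have hlin : ∀ k : ℝ, Tendsto (fun h : ℝ => k * h) (𝓝[>] 0) (𝓝 0) := fun k =>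
      tendsto_nhdsWithin_of_tendsto_nhds (by simpa using (continuous_const_mul k).tendsto 0)
    exact (eventually_mem_nhdsWithin (a := (0 : ℝ)) (s := Ioi 0)).and <|
      ((hlin 4).eventually_lt_const hK).and <|
      ((hlin 3).eventually_lt_const hr).and ((hlin (16 * c)).eventually_lt_const (by positivity))
  obtain ⟨h, hh, hhK, hhr, hhC⟩ := hsmall.exists
  -- the strip has `|ω₁ - ω₂ + a - b| ≤ 4h`, so this is the width that makes `(4h)² ≤ 2Kε`
  set ε := 8 * h ^ 2 / K
  have hε : 0 < ε := by positivity
  have hεh : ε ≤ 2 * h := by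
    rw [div_le_iff₀ hK]; nlinarith
  have hKε : (4 * h) ^ 2 ≤ 2 * K * ε := by
    rw [mul_div_assoc', le_div_iff₀ hK]; nlinarith
  have hstrip :=
    le_prod_withDensity_antidiagonalStrip (t := t) (h := h) (s := 2 * t + a - b) (ε := ε)
      (fun x ⟨hx_lo, hx_hi⟩ => (hϱp x).1 (abs_lt.mpr ⟨by linarith, by linarith⟩))
      (fun x ⟨hx_lo, hx_hi⟩ y ⟨hy_lo, hy_hi⟩ => (hϱp y).2 (abs_lt.mpr ⟨by linarith, by linarith⟩))
  refine ⟨t + a + K - ε, t + a + K + ε, t + a - K - ε, t + a - K + ε, by linarith, by linarith,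
    lt_of_lt_of_le ?_ (hstrip.trans
      (measure_mono (antidiagonalStrip_subset_eigenvalues_mem_Icc hK.le hεh hKε)))⟩
  -- `c · (2ε)² < p² · 2ε · h` because `2cε = 16ch²/K < p²h`
  have hcε : 2 * c * ε < p ^ 2 * h := by
    rw [mul_div_assoc', div_lt_iff₀ hK]; nlinarith
  have hlen : ∀ x : ℝ, volume (Icc (x - ε) (x + ε)) = ENNReal.ofReal (2 * ε) := fun x => by
    rw [Real.volume_Icc]; ring_nf
  rw [hlen, hlen, ← ENNReal.ofReal_toReal hC,
    ← ENNReal.ofReal_mul ENNReal.toReal_nonneg, ← ENNReal.ofReal_mul (by positivity),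
    ← ENNReal.ofReal_mul hp.le, ← ENNReal.ofReal_mul hp.le, ← ENNReal.ofReal_mul (by positivity),
    ENNReal.ofReal_lt_ofReal_iff (by positivity)]
  nlinarith

end

theorem two_by_two_counterexample_general (a b : ℝ) (c : ℂ) (hc : c ≠ 0)
    (ϱ : ℝ → ℝ) (ρmax : ℝ)
    (hcont : Continuous ϱ)
    (hpos : ∃ t : ℝ, 0 < ϱ t ∧ 0 < ϱ (t + a - b)) :
    ∀ C > (0 : ℝ), ∃ u₁ v₁ u₂ v₂ : ℝ, u₁ < v₁ ∧ u₂ < v₂ ∧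
      ENNReal.ofReal C * ENNReal.ofReal ρmax ^ 2 *
          volume (Set.Icc u₁ v₁) * volume (Set.Icc u₂ v₂)
        < ((volume.withDensity fun t => ENNReal.ofReal (ϱ t)).prod
            (volume.withDensity fun t => ENNReal.ofReal (ϱ t)))
            {ω : ℝ × ℝ |
              (ω.1 + ω.2 + a + b +
                Real.sqrt ((ω.1 - ω.2 + a - b) ^ 2 + 4 * ‖c‖ ^ 2)) / 2
                ∈ Set.Icc u₁ v₁ ∧
              (ω.1 + ω.2 + a + b -
                Real.sqrt ((ω.1 - ω.2 + a - b) ^ 2 + 4 * ‖c‖ ^ 2)) / 2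
                ∈ Set.Icc u₂ v₂} := by
  intro C _
  obtain ⟨t, ht, ht'⟩ := hpos
  exact exists_Icc_mul_volume_lt_prod_eigenvalues_mem a b ‖c‖ (norm_pos_iff.mpr hc) hcont ht ht'
    (by finiteness)

/-- **The counterexample** (Section 2): for the `2 × 2` random operator
`H(ω) = [[a + ω₁, c], [c̄, b + ω₂]]` with `c ≠ 0` and `ω₁, ω₂` i.i.d. with a bounded
continuous density `ϱ` which is strictly positive at some pair corresponding to eigenvalues
at the gap edge (i.e. `ϱ(t) > 0` and `ϱ(t + a - b) > 0` for some `t`), no constant `C` makes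
the two-interval Wegner-type bound valid: for every `C > 0` there are intervals
`I₁ = [u₁, v₁]`, `I₂ = [u₂, v₂]` with `ℙ{E₁ ∈ I₁, E₂ ∈ I₂} > C · ρmax² · |I₁| · |I₂|`. -/
theorem two_by_two_counterexample (a b : ℝ) (c : ℂ) (hc : c ≠ 0)
    (ϱ : ℝ → ℝ) (ρmax : ℝ)
    (hmeas : Measurable ϱ) (hnn : ∀ t, 0 ≤ ϱ t)
    (hprob : IsProbabilityMeasure (volume.withDensity fun t => ENNReal.ofReal (ϱ t)))
    (hbd : ∀ t, ϱ t ≤ ρmax) (hcont : Continuous ϱ)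
    (hpos : ∃ t : ℝ, 0 < ϱ t ∧ 0 < ϱ (t + a - b)) :
    ∀ C > (0 : ℝ), ∃ u₁ v₁ u₂ v₂ : ℝ, u₁ < v₁ ∧ u₂ < v₂ ∧
      ENNReal.ofReal C * ENNReal.ofReal ρmax ^ 2 *
          volume (Set.Icc u₁ v₁) * volume (Set.Icc u₂ v₂)
        < ((volume.withDensity fun t => ENNReal.ofReal (ϱ t)).prod
            (volume.withDensity fun t => ENNReal.ofReal (ϱ t)))
            {ω : ℝ × ℝ |
              (ω.1 + ω.2 + a + b +
                Real.sqrt ((ω.1 - ω.2 + a - b) ^ 2 + 4 * ‖c‖ ^ 2)) / 2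
                ∈ Set.Icc u₁ v₁ ∧
              (ω.1 + ω.2 + a + b -
                Real.sqrt ((ω.1 - ω.2 + a - b) ^ 2 + 4 * ‖c‖ ^ 2)) / 2
                ∈ Set.Icc u₂ v₂} :=
  two_by_two_counterexample_general a b c hc ϱ ρmax hcont hpos
end
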